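/- arXiv:2509.07914 — 3 statements merged into one kernel-verified Lean document; each statement's English description precedes it below -/
import Mathlib

section
/- Let g: ℝⁿ → ℝ be convex, differentiable, with g(0) = 0 and g(w) ≥ (1/(2t))‖w‖² for all w, and let δ > 0. With ρ_δ the Gibbs density proportional to e^{−g/δ}, the second moment satisfies ∫ ‖w‖² ρ_δ(w) dw ≤ 2 n t δ. -/
/-!
Convexity and `g 0 = 0` give `g (s • w) ≤ s * g w` for `s ∈ (0, 1)`, hence
`e^{-g(s•w)/δ} ≥ e^{-g(w)/δ} (1 + (1 - s) g(w)/δ)`. Integrating, and using that the substitution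
`w ↦ s • w` multiplies `Z = ∫ e^{-g/δ}` by `s⁻ⁿ`, gives `Z + (1 - s)/δ ∫ g e^{-g/δ} ≤ s⁻ⁿ Z`;
letting `s → 1` yields `∫ g ρ ≤ n δ`, in place of the integration by parts `∫ ⟨w, ∇g⟩ ρ = n δ`.
Finally `‖w‖² ≤ 2 t g(w)`.
-/

open Real Set Filter Topology Module MeasureTheory

lemma ConvexOn.map_smul_le_mul_of_map_zero {E : Type*} [AddCommGroup E] [Module ℝ E]
    {s : Set E} {f : E → ℝ} (hf : ConvexOn ℝ s f) (h0 : (0 : E) ∈ s) (hf0 : f 0 = 0)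
    {x : E} (hx : x ∈ s) {a : ℝ} (ha0 : 0 ≤ a) (ha1 : a ≤ 1) : f (a • x) ≤ a * f x := by
  simpa [hf0] using hf.2 hx h0 ha0 (sub_nonneg.2 ha1) (add_sub_cancel a 1)

lemma exp_neg_div_mul_one_add_le_of_convexOn {E : Type*} [AddCommGroup E] [Module ℝ E]
    {g : E → ℝ} (hg : ConvexOn ℝ univ g) (hg0 : g 0 = 0) {δ : ℝ} (hδ : 0 ≤ δ) (w : E) {s : ℝ}
    (hs0 : 0 ≤ s) (hs1 : s ≤ 1) :
    exp (-g w / δ) * (1 + (1 - s) * g w / δ) ≤ exp (-g (s • w) / δ) :=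
  calc exp (-g w / δ) * (1 + (1 - s) * g w / δ)
      ≤ exp (-g w / δ) * exp ((1 - s) * g w / δ) := by
        gcongr; linarith [add_one_le_exp ((1 - s) * g w / δ)]
    _ = exp (-(s * g w) / δ) := by rw [← exp_add]; ring_nf
    _ ≤ exp (-g (s • w) / δ) := by
        gcongr; exact hg.map_smul_le_mul_of_map_zero trivial hg0 trivial hs0 hs1

/-- `((s ^ n)⁻¹ - 1) / (1 - s)` is minus the difference quotient of `s ↦ s⁻ⁿ` at `1`, so it
tends to `n` as `s → 1⁻`. -/
lemma le_natCast_mul_of_forall_one_sub_mul_le {a b : ℝ} (n : ℕ)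
    (h : ∀ s ∈ Ioo (0 : ℝ) 1, (1 - s) * a ≤ ((s ^ n)⁻¹ - 1) * b) : a ≤ n * b := by
  have hderiv : HasDerivAt (fun s : ℝ => (s ^ n)⁻¹) (-n) 1 := by
    have := (hasDerivAt_pow n (1 : ℝ)).inv (by simp)
    simp only [one_pow, mul_one, div_one] at this
    exact this
  have hslope : Tendsto (fun s => -slope (fun s : ℝ => (s ^ n)⁻¹) 1 s * b) (𝓝[<] 1)
      (𝓝 (n * b)) := by
    have hleft : 𝓝[<] (1 : ℝ) ≤ 𝓝[≠] 1 := nhdsWithin_mono 1 fun _ hs => ne_of_lt hs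
    simpa using ((hasDerivAt_iff_tendsto_slope.1 hderiv).mono_left hleft).neg.mul_const b
  refine ge_of_tendsto hslope ?_
  filter_upwards [Ioo_mem_nhdsLT (zero_lt_one' ℝ)] with s hs
  have h1s : 0 < 1 - s := sub_pos.2 hs.2
  calc a ≤ ((s ^ n)⁻¹ - 1) * b / (1 - s) := (le_div_iff₀' h1s).2 (h s hs)
    _ = _ := by rw [slope_def_field, one_pow, inv_one, ← neg_sub 1 s, div_neg]; ring

section Scaling

variable {E : Type*} [NormedAddCommGroup E] [NormedSpace ℝ E] [FiniteDimensional ℝ E]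
  [MeasurableSpace E] [BorelSpace E] (μ : Measure E) [μ.IsAddHaarMeasure]
  {g : E → ℝ} {δ : ℝ}

lemma integral_exp_neg_div_add_le_of_convexOn (hg : ConvexOn ℝ univ g) (hg0 : g 0 = 0)
    (hδ : 0 ≤ δ) (hZ : Integrable (fun w => exp (-g w / δ)) μ)
    (hI : Integrable (fun w => g w * exp (-g w / δ)) μ) {s : ℝ} (hs : s ∈ Ioo (0 : ℝ) 1) :
    ∫ w, exp (-g w / δ) ∂μ + (1 - s) / δ * ∫ w, g w * exp (-g w / δ) ∂μ
      ≤ (s ^ finrank ℝ E)⁻¹ * ∫ w, exp (-g w / δ) ∂μ := by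
  have hexpanded : Integrable (fun w => exp (-g w / δ) * (1 + (1 - s) * g w / δ)) μ := by
    refine (hZ.add (hI.const_mul ((1 - s) / δ))).congr (ae_of_all _ fun w => ?_)
    simp only [Pi.add_apply]; ring
  have hscaled : Integrable (fun w => exp (-g (s • w) / δ)) μ :=
    (integrable_comp_smul_iff μ (fun w => exp (-g w / δ)) hs.1.ne').2 hZ
  calc ∫ w, exp (-g w / δ) ∂μ + (1 - s) / δ * ∫ w, g w * exp (-g w / δ) ∂μ
      = ∫ w, exp (-g w / δ) * (1 + (1 - s) * g w / δ) ∂μ := by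
        rw [← integral_const_mul, ← integral_add hZ (hI.const_mul _)]
        congr 1 with w; ring
    _ ≤ ∫ w, exp (-g (s • w) / δ) ∂μ :=
        integral_mono hexpanded hscaled fun w =>
          exp_neg_div_mul_one_add_le_of_convexOn hg hg0 hδ w hs.1.le hs.2.le
    _ = (s ^ finrank ℝ E)⁻¹ * ∫ w, exp (-g w / δ) ∂μ := by
        rw [Measure.integral_comp_smul μ (fun w => exp (-g w / δ)),
          abs_of_nonneg (by positivity [hs.1.le]), smul_eq_mul]

lemma integral_mul_exp_neg_div_le_of_convexOn (hg : ConvexOn ℝ univ g) (hg0 : g 0 = 0)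
    (hδ : 0 < δ) (hZ : Integrable (fun w => exp (-g w / δ)) μ)
    (hI : Integrable (fun w => g w * exp (-g w / δ)) μ) :
    ∫ w, g w * exp (-g w / δ) ∂μ ≤ finrank ℝ E * δ * ∫ w, exp (-g w / δ) ∂μ := by
  set Z := ∫ w, exp (-g w / δ) ∂μ
  set I := ∫ w, g w * exp (-g w / δ) ∂μ
  rw [mul_assoc]
  refine le_natCast_mul_of_forall_one_sub_mul_le _ fun s hs => ?_
  have h := integral_exp_neg_div_add_le_of_convexOn μ hg hg0 hδ.le hZ hI hs
  calc (1 - s) * I = δ * ((1 - s) / δ * I) := by field_simp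
    _ ≤ δ * ((s ^ finrank ℝ E)⁻¹ * Z - Z) := by gcongr; linarith
    _ = ((s ^ finrank ℝ E)⁻¹ - 1) * (δ * Z) := by ring

end Scaling

section Integrability

variable {V : Type*} [NormedAddCommGroup V] [InnerProductSpace ℝ V] [FiniteDimensional ℝ V]
  [MeasurableSpace V] [BorelSpace V]

lemma integrable_exp_neg_mul_sq_norm {b : ℝ} (hb : 0 < b) :
    Integrable (fun v : V => exp (-b * ‖v‖ ^ 2)) := by
  have h := (GaussianFourier.integrable_cexp_neg_mul_sq_norm_add (V := V) (b := (b : ℂ))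
    (by simpa using hb) 0 0).norm
  refine h.congr (ae_of_all _ fun v => ?_)
  simp [Complex.norm_exp, ← Complex.ofReal_pow]

variable {g : V → ℝ} {c δ : ℝ}

lemma integrable_exp_neg_div_of_sq_norm_le (hg : Continuous g) (hc : 0 < c)
    (hgc : ∀ w, c * ‖w‖ ^ 2 ≤ g w) (hδ : 0 < δ) : Integrable (fun w => exp (-g w / δ)) := by
  refine (integrable_exp_neg_mul_sq_norm (div_pos hc hδ)).mono'
    (by fun_prop) (ae_of_all _ fun w => ?_)
  rw [norm_of_nonneg (exp_pos _).le, exp_le_exp, neg_mul, neg_div, neg_le_neg_iff,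
    div_mul_eq_mul_div, div_le_div_iff_of_pos_right hδ]
  exact hgc w

lemma integrable_mul_exp_neg_div_of_sq_norm_le (hg : Continuous g) (hc : 0 < c)
    (hgc : ∀ w, c * ‖w‖ ^ 2 ≤ g w) (hδ : 0 < δ) :
    Integrable (fun w => g w * exp (-g w / δ)) := by
  refine ((integrable_exp_neg_div_of_sq_norm_le hg hc hgc (by positivity : 0 < 2 * δ)).const_mul
    (2 * δ)).mono' (by fun_prop) (ae_of_all _ fun w => ?_)
  have hg0 : 0 ≤ g w := le_trans (by positivity) (hgc w)
  have hy := mul_exp_neg_le_exp_neg_one (g w / (2 * δ))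
  rw [norm_of_nonneg (by positivity)]
  calc g w * exp (-g w / δ) = 2 * δ * (g w / (2 * δ) * exp (-(g w / (2 * δ))))
        * exp (-g w / (2 * δ)) := by
        have : exp (-g w / δ) = exp (-(g w / (2 * δ))) * exp (-g w / (2 * δ)) := by
          rw [← exp_add]; ring_nf
        rw [this]; field_simp
    _ ≤ 2 * δ * 1 * exp (-g w / (2 * δ)) := by
        gcongr; exact hy.trans (exp_le_one_iff.2 (by norm_num))
    _ = 2 * δ * exp (-g w / (2 * δ)) := by ring

end Integrability

theorem gibbs_second_moment_bound_general
    (n : ℕ) (t δ : ℝ) (ht : 0 < t) (hδ : 0 < δ)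
    (g : EuclideanSpace ℝ (Fin n) → ℝ)
    (hg_conv : ConvexOn ℝ Set.univ g)
    (hg0 : g 0 = 0)
    (hg_growth : ∀ w, g w ≥ (1 / (2 * t)) * ‖w‖ ^ 2)
    (Z : ℝ) (hZ : Z = ∫ w : EuclideanSpace ℝ (Fin n), Real.exp (-(g w) / δ))
    (ρ : EuclideanSpace ℝ (Fin n) → ℝ)
    (hρ : ∀ w, ρ w = Real.exp (-(g w) / δ) / Z) :
    (∫ w : EuclideanSpace ℝ (Fin n), ‖w‖ ^ 2 * ρ w) ≤ 2 * n * t * δ := by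
  have hg_cont : Continuous g := continuousOn_univ.1 (hg_conv.continuousOn isOpen_univ)
  have hc : 0 < 1 / (2 * t) := by positivity
  have hZ_int := integrable_exp_neg_div_of_sq_norm_le hg_cont hc hg_growth hδ
  have hI_int := integrable_mul_exp_neg_div_of_sq_norm_le hg_cont hc hg_growth hδ
  have hZ_pos : 0 < Z := hZ ▸ integral_exp_pos hZ_int
  have hmoment := integral_mul_exp_neg_div_le_of_convexOn volume hg_conv hg0 hδ hZ_int hI_int
  rw [finrank_euclideanSpace_fin, ← hZ] at hmoment
  have hsq : ∀ w, ‖w‖ ^ 2 * exp (-g w / δ) ≤ 2 * t * (g w * exp (-g w / δ)) := fun w => by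
    have := hg_growth w
    rw [ge_iff_le, div_mul_eq_mul_div, one_mul, div_le_iff₀ (by positivity)] at this
    rw [← mul_assoc]; gcongr; linarith
  calc ∫ w, ‖w‖ ^ 2 * ρ w = (∫ w, ‖w‖ ^ 2 * exp (-g w / δ)) / Z := by
        simp_rw [hρ, ← mul_div_assoc]; exact integral_div _ _
    _ ≤ (2 * t * ∫ w, g w * exp (-g w / δ)) / Z := by
        rw [← integral_const_mul]
        refine div_le_div_of_nonneg_right ?_ hZ_pos.le
        exact integral_mono_of_nonneg (ae_of_all _ fun w => by positivity)
          (hI_int.const_mul _) (ae_of_all _ hsq)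
    _ ≤ (2 * t * (n * δ * Z)) / Z := by gcongr
    _ = 2 * n * t * δ := by field_simp

/-- For `g` convex, differentiable, with `g 0 = 0` and quadratic growth
`g w ≥ (1/(2t))‖w‖²`, and `δ > 0`, the Gibbs density `ρ_δ ∝ e^{−g/δ}` has second moment
`∫ ‖w‖² ρ_δ(w) dw ≤ 2 n t δ`. -/
theorem gibbs_second_moment_bound
    (n : ℕ) (t δ : ℝ) (ht : 0 < t) (hδ : 0 < δ)
    (g : EuclideanSpace ℝ (Fin n) → ℝ)
    (hg_conv : ConvexOn ℝ Set.univ g)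
    (hg_diff : Differentiable ℝ g)
    (hg0 : g 0 = 0)
    (hg_growth : ∀ w, g w ≥ (1 / (2 * t)) * ‖w‖ ^ 2)
    (Z : ℝ) (hZ : Z = ∫ w : EuclideanSpace ℝ (Fin n), Real.exp (-(g w) / δ))
    (ρ : EuclideanSpace ℝ (Fin n) → ℝ)
    (hρ : ∀ w, ρ w = Real.exp (-(g w) / δ) / Z) :
    (∫ w : EuclideanSpace ℝ (Fin n), ‖w‖ ^ 2 * ρ w) ≤ 2 * n * t * δ :=
  gibbs_second_moment_bound_general n t δ ht hδ g hg_conv hg0 hg_growth Z hZ ρ hρ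
end

section
/- Let T: ℝⁿ → ℝⁿ be an averaged operator with Fix(T) ≠ ∅, and let x_{k+1} = T(x_k) + ε_k with Σ_k ‖ε_k‖ < ∞. Then {x_k} converges to a fixed point of T. -/
/-!
Nonexpansiveness of `T` gives `‖x (k+1) - q‖ ≤ ‖x k - q‖ + ‖ε k‖` for every fixed point `q`, so
`‖x k - q‖` converges (quasi-Fejér monotonicity). Averagedness sharpens nonexpansiveness to
`(1 - α) ‖x - T x‖² ≤ α (‖x - p‖² - ‖T x - p‖²)`, and along the iterates both norms on the right
tend to the same limit, so the residual `x k - T (x k)` tends to `0`. The iterates are bounded, so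
a subsequence converges; its limit is fixed by continuity of `T`, and since the distance to it
converges and tends to `0` along the subsequence, the whole sequence converges to it.
-/

open Filter Topology Function

theorem exists_tendsto_of_le_add_of_summable {a e : ℕ → ℝ} (ha : BddBelow (Set.range a))
    (he : Summable e) (h : ∀ k, a (k + 1) ≤ a k + e k) : ∃ L, Tendsto a atTop (𝓝 L) := by
  set s : ℕ → ℝ := fun k => ∑ j ∈ Finset.range k, e j
  have hs : Tendsto s atTop (𝓝 (∑' j, e j)) := he.hasSum.tendsto_sum_nat
  have hanti : Antitone (a - s) := antitone_nat_of_succ_le fun k => by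
    simp only [Pi.sub_apply, s, Finset.sum_range_succ]
    linarith [h k]
  obtain ⟨m, hm⟩ := ha
  obtain ⟨M, hM⟩ := hs.bddAbove_range
  have hbdd : BddBelow (Set.range (a - s)) := ⟨m - M, by
    rintro _ ⟨k, rfl⟩
    simp only [Pi.sub_apply]
    linarith [hm ⟨k, rfl⟩, hM ⟨k, rfl⟩]⟩
  refine ⟨_, (tendsto_atTop_ciInf hanti hbdd).add hs |>.congr fun k => ?_⟩
  simp

section Averaged

variable {E : Type*} [NormedAddCommGroup E] [InnerProductSpace ℝ E]

theorem norm_one_sub_smul_add_smul_sq (α : ℝ) (u v : E) :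
    ‖(1 - α) • u + α • v‖ ^ 2 = (1 - α) * ‖u‖ ^ 2 + α * ‖v‖ ^ 2 - α * (1 - α) * ‖u - v‖ ^ 2 := by
  rw [norm_add_sq_real, norm_sub_sq_real, norm_smul, norm_smul, inner_smul_left, inner_smul_right,
    mul_pow, mul_pow, Real.norm_eq_abs, Real.norm_eq_abs, sq_abs, sq_abs]
  simp only [conj_trivial]
  ring

variable {α : ℝ} {S T : E → E}

theorem averaged_norm_sub_sq_le (hS : LipschitzWith 1 S) (hT : ∀ x, T x = (1 - α) • x + α • S x)
    (x y : E) :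
    α * ‖T x - T y‖ ^ 2 + (1 - α) * ‖(x - T x) - (y - T y)‖ ^ 2 ≤ α * ‖x - y‖ ^ 2 := by
  have hTxy : T x - T y = (1 - α) • (x - y) + α • (S x - S y) := by
    rw [hT, hT]; module
  have hres : (x - T x) - (y - T y) = α • ((x - y) - (S x - S y)) := by
    rw [hT, hT]; module
  have hSxy : ‖S x - S y‖ ≤ ‖x - y‖ := by simpa using hS.norm_sub_le x y
  rw [hTxy, hres, norm_one_sub_smul_add_smul_sq, norm_smul, mul_pow, Real.norm_eq_abs, sq_abs]
  nlinarith [mul_le_mul_of_nonneg_left (pow_le_pow_left₀ (norm_nonneg _) hSxy 2) (sq_nonneg α)]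

theorem lipschitzWith_one_of_averaged (hα₀ : 0 < α) (hα₁ : α ≤ 1) (hS : LipschitzWith 1 S)
    (hT : ∀ x, T x = (1 - α) • x + α • S x) : LipschitzWith 1 T :=
  LipschitzWith.of_dist_le_mul fun x y => by
    have key := averaged_norm_sub_sq_le hS hT x y
    have : ‖T x - T y‖ ^ 2 ≤ ‖x - y‖ ^ 2 := by nlinarith [sq_nonneg ‖(x - T x) - (y - T y)‖]
    simpa [dist_eq_norm] using (pow_le_pow_iff_left₀ (norm_nonneg _) (norm_nonneg _) two_ne_zero).1 this

end Averaged

section Perturbed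

variable {E : Type*} [SeminormedAddCommGroup E] {T : E → E} {x ε : ℕ → E} {q : E}

theorem exists_tendsto_norm_sub_of_perturbed (hT : LipschitzWith 1 T) (hq : IsFixedPt T q)
    (hiter : ∀ k, x (k + 1) = T (x k) + ε k) (hsum : Summable fun k => ‖ε k‖) :
    ∃ L, Tendsto (fun k => ‖x k - q‖) atTop (𝓝 L) := by
  refine exists_tendsto_of_le_add_of_summable ⟨0, ?_⟩ hsum fun k => ?_
  · rintro _ ⟨k, rfl⟩
    exact norm_nonneg _
  · calc ‖x (k + 1) - q‖ = ‖(T (x k) - T q) + ε k‖ := by rw [hiter, hq.eq]; abel_nf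
      _ ≤ ‖T (x k) - T q‖ + ‖ε k‖ := norm_add_le _ _
      _ ≤ ‖x k - q‖ + ‖ε k‖ := by gcongr; simpa using hT.norm_sub_le (x k) q

theorem tendsto_norm_apply_sub_of_perturbed (hT : LipschitzWith 1 T) (hq : IsFixedPt T q)
    (hiter : ∀ k, x (k + 1) = T (x k) + ε k) (hε : Tendsto ε atTop (𝓝 0)) {L : ℝ}
    (hL : Tendsto (fun k => ‖x k - q‖) atTop (𝓝 L)) :
    Tendsto (fun k => ‖T (x k) - q‖) atTop (𝓝 L) := by
  have hlower : Tendsto (fun k => ‖x (k + 1) - q‖ - ‖ε k‖) atTop (𝓝 L) := by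
    simpa using ((tendsto_add_atTop_iff_nat 1).2 hL).sub (tendsto_zero_iff_norm_tendsto_zero.1 hε)
  refine tendsto_of_tendsto_of_tendsto_of_le_of_le hlower hL (fun k => ?_) (fun k => ?_)
  · rw [sub_le_iff_le_add, hiter, add_sub_right_comm]
    exact norm_add_le _ _
  · simpa [hq.eq] using hT.norm_sub_le (x k) q

end Perturbed

theorem tendsto_norm_sub_apply_of_perturbed_averaged {E : Type*} [NormedAddCommGroup E]
    [InnerProductSpace ℝ E] {α : ℝ} {S T : E → E} {x ε : ℕ → E} {p : E}
    (hα₀ : 0 < α) (hα₁ : α < 1) (hS : LipschitzWith 1 S)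
    (hT : ∀ x, T x = (1 - α) • x + α • S x) (hp : IsFixedPt T p)
    (hiter : ∀ k, x (k + 1) = T (x k) + ε k) (hsum : Summable fun k => ‖ε k‖) :
    Tendsto (fun k => ‖x k - T (x k)‖) atTop (𝓝 0) := by
  have hT₁ := lipschitzWith_one_of_averaged hα₀ hα₁.le hS hT
  obtain ⟨L, hL⟩ := exists_tendsto_norm_sub_of_perturbed hT₁ hp hiter hsum
  have hTL := tendsto_norm_apply_sub_of_perturbed hT₁ hp hiter
    (tendsto_zero_iff_norm_tendsto_zero.2 hsum.tendsto_atTop_zero) hL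
  have hbound : ∀ k, ‖x k - T (x k)‖ ^ 2 ≤
      α / (1 - α) * (‖x k - p‖ ^ 2 - ‖T (x k) - p‖ ^ 2) := fun k => by
    have key := averaged_norm_sub_sq_le hS hT (x k) p
    rw [hp.eq, sub_self, sub_zero] at key
    rw [div_mul_eq_mul_div, le_div_iff₀ (sub_pos.2 hα₁)]
    linarith
  have hsq : Tendsto (fun k => ‖x k - T (x k)‖ ^ 2) atTop (𝓝 0) := by
    refine tendsto_of_tendsto_of_tendsto_of_le_of_le tendsto_const_nhds ?_
      (fun k => sq_nonneg _) hbound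
    simpa using ((hL.pow 2).sub (hTL.pow 2)).const_mul (α / (1 - α))
  simpa [Real.sqrt_sq (norm_nonneg _)] using hsq.sqrt

theorem exists_isFixedPt_tendsto_of_tendsto_dist {X : Type*} [MetricSpace X] [ProperSpace X]
    {F : X → X} (hF : Continuous F) {x : ℕ → X} {p : X} (hp : IsFixedPt F p)
    (hdist : ∀ q, IsFixedPt F q → ∃ L, Tendsto (fun k => dist (x k) q) atTop (𝓝 L))
    (hres : Tendsto (fun k => dist (x k) (F (x k))) atTop (𝓝 0)) :
    ∃ q, IsFixedPt F q ∧ Tendsto x atTop (𝓝 q) := by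
  obtain ⟨L, hL⟩ := hdist p hp
  obtain ⟨M, hM⟩ := hL.bddAbove_range
  obtain ⟨q, -, φ, hφ, hxφ⟩ := tendsto_subseq_of_bounded (Metric.isBounded_closedBall (x := p))
    fun k => Metric.mem_closedBall.2 (hM ⟨k, rfl⟩)
  have hq : IsFixedPt F q := by
    have hlim := hxφ.dist ((hF.tendsto q).comp hxφ)
    exact (dist_eq_zero.1 (tendsto_nhds_unique hlim (hres.comp hφ.tendsto_atTop))).symm
  obtain ⟨L', hL'⟩ := hdist q hq
  have hL'0 : L' = 0 :=
    tendsto_nhds_unique (hL'.comp hφ.tendsto_atTop) (tendsto_iff_dist_tendsto_zero.1 hxφ)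
  exact ⟨q, hq, tendsto_iff_dist_tendsto_zero.2 (hL'0 ▸ hL')⟩

/-- If `T` is an averaged operator (i.e. `T = (1−α)I + αS` for some
`α ∈ (0,1)` and nonexpansive `S`) with a fixed point, and `x_{k+1} = T(x_k) + ε_k` with
`Σ‖ε_k‖ < ∞`, then `{x_k}` converges to a fixed point of `T`. -/
theorem perturbed_averaged_converges
    (n : ℕ) (T : EuclideanSpace ℝ (Fin n) → EuclideanSpace ℝ (Fin n))
    (hT_avg : ∃ α : ℝ, 0 < α ∧ α < 1 ∧
      ∃ S : EuclideanSpace ℝ (Fin n) → EuclideanSpace ℝ (Fin n),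
        (∀ x y, ‖S x - S y‖ ≤ ‖x - y‖) ∧ ∀ x, T x = (1 - α) • x + α • S x)
    (hfix : ∃ p, T p = p)
    (x ε : ℕ → EuclideanSpace ℝ (Fin n))
    (hiter : ∀ k, x (k + 1) = T (x k) + ε k)
    (hsum : Summable fun k => ‖ε k‖) :
    ∃ xstar, T xstar = xstar ∧ Filter.Tendsto x Filter.atTop (nhds xstar) := by
  obtain ⟨α, hα₀, hα₁, S, hS, hTS⟩ := hT_avg
  obtain ⟨p, hp⟩ := hfix
  have hS₁ : LipschitzWith 1 S :=
    LipschitzWith.of_dist_le_mul fun u v => by simpa [dist_eq_norm] using hS u v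
  have hT₁ := lipschitzWith_one_of_averaged hα₀ hα₁.le hS₁ hTS
  refine exists_isFixedPt_tendsto_of_tendsto_dist hT₁.continuous hp (fun q hq => ?_) ?_
  · simpa only [dist_eq_norm] using exists_tendsto_norm_sub_of_perturbed hT₁ hq hiter hsum
  · simpa only [dist_eq_norm] using
      tendsto_norm_sub_apply_of_perturbed_averaged hα₀ hα₁ hS₁ hTS hp hiter hsum
end

section
/- Let f, g, h be proper, LSC, convex with h L-smooth, 0 < t < 2/L. The Davis–Yin operator T(z) = z − prox_{tf}(z) + prox_{tg}(2 prox_{tf}(z) − z − t∇h(prox_{tf}(z))) is averaged, and if z* ∈ Fix(T) then prox_{tf}(z*) is a minimizer of f + g + h (under a standard constraint qualification ensuring subdifferential sum rules). -/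
/-!
Write `R = (T - I) x - (T - I) y`. Firm nonexpansiveness of both proximal maps, together with the
Baillon–Haddad cocoercivity `‖∇h x - ∇h y‖² ≤ L ⟪∇h x - ∇h y, x - y⟫` (a consequence of the descent
lemma and convexity), gives `2 ⟪x - y, R⟫ + (2 - tL/2) ‖R‖² ≤ 0` once the cross term is absorbed by
Young's inequality. Since `2 - tL/2 > 1`, this says that `T = (1 - α) I + α S` with
`α = 2 / (4 - tL)` and `S = I + α⁻¹ (T - I)` nonexpansive. At a fixed point `z` with
`p = prox_{tf} z`, the optimality conditions of the two proximal problems add up to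
`-∇h p ∈ ∂f p + ∂g p`, and the gradient inequality for `h` turns this into minimality of
`f + g + h` at `p`.
-/

open Set Filter Topology RealInnerProductSpace

variable {E : Type*} [NormedAddCommGroup E] [InnerProductSpace ℝ E]

def IsProx (f : E → ℝ) (t : ℝ) (y p : E) : Prop :=
  IsMinOn (fun z => f z + (1 / (2 * t)) * ‖z - y‖ ^ 2) univ p

namespace IsProx

variable {f : E → ℝ} {t : ℝ}

theorem inner_sub_le {y p : E} (hf : ConvexOn ℝ univ f) (ht : 0 < t) (hp : IsProx f t y p)
    (x : E) : ⟪y - p, x - p⟫ ≤ t * (f x - f p) := by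
  set d := x - p
  have hstep : ∀ s : ℝ, 0 < s → s ≤ 1 → ⟪y - p, d⟫ ≤ t * (f x - f p) + s * (‖d‖ ^ 2 / 2) := by
    intro s hs hs1
    have hmin : f p + (1 / (2 * t)) * ‖p - y‖ ^ 2
        ≤ f (p + s • d) + (1 / (2 * t)) * ‖p + s • d - y‖ ^ 2 := hp (mem_univ _)
    have hconv : f (p + s • d) ≤ (1 - s) * f p + s * f x := by
      have hseg : p + s • d = (1 - s) • p + s • x := by module
      rw [hseg]
      exact hf.2 (mem_univ p) (mem_univ x) (by linarith) hs.le (by ring)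
    have hnorm : ‖p + s • d - y‖ ^ 2 = ‖p - y‖ ^ 2 - 2 * s * ⟪y - p, d⟫ + s ^ 2 * ‖d‖ ^ 2 := by
      rw [show p + s • d - y = s • d - (y - p) by abel, norm_sub_sq_real, norm_smul,
        norm_sub_rev y p, real_inner_smul_left, real_inner_comm, Real.norm_eq_abs, abs_of_pos hs]
      ring
    rw [hnorm] at hmin
    have hscaled : s * (⟪y - p, d⟫ - t * (f x - f p) - s * (‖d‖ ^ 2 / 2)) ≤ 0 := by
      field_simp at hmin
      nlinarith
    nlinarith
  refine ge_of_tendsto (x := 𝓝[>] (0 : ℝ))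
    (f := fun s : ℝ => t * (f x - f p) + s * (‖d‖ ^ 2 / 2)) ?_ ?_
  · have hc : Continuous fun s : ℝ => t * (f x - f p) + s * (‖d‖ ^ 2 / 2) := by fun_prop
    simpa using (hc.tendsto 0).mono_left nhdsWithin_le_nhds
  · filter_upwards [Ioc_mem_nhdsGT one_pos] with s hs using hstep s hs.1 hs.2

theorem norm_sub_sq_le_inner {x y p q : E} (hf : ConvexOn ℝ univ f) (ht : 0 < t)
    (hp : IsProx f t x p) (hq : IsProx f t y q) : ‖p - q‖ ^ 2 ≤ ⟪x - y, p - q⟫ := by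
  have hsum := add_le_add (hp.inner_sub_le hf ht q) (hq.inner_sub_le hf ht p)
  have e : ⟪x - p, q - p⟫ + ⟪y - q, p - q⟫ = ⟪(p - q) - (x - y), p - q⟫ := by
    rw [← neg_sub p q, inner_neg_right, neg_add_eq_sub, ← inner_sub_left]
    congr 1
    abel
  rw [e, inner_sub_left, real_inner_self_eq_norm_sq] at hsum
  linarith

end IsProx

def IsAveraged {F : Type*} [NormedAddCommGroup F] [NormedSpace ℝ F] (T : F → F) : Prop :=
  ∃ α : ℝ, 0 < α ∧ α < 1 ∧ ∃ S : F → F,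
    (∀ x y, ‖S x - S y‖ ≤ ‖x - y‖) ∧ ∀ x, T x = (1 - α) • x + α • S x

theorem isAveraged_of_two_inner_add_mul_norm_sq_nonpos {T : E → E} {κ : ℝ} (hκ : 1 < κ)
    (hT : ∀ x y, 2 * ⟪x - y, (T x - x) - (T y - y)⟫ + κ * ‖(T x - x) - (T y - y)‖ ^ 2 ≤ 0) :
    IsAveraged T := by
  have hκ0 : 0 < κ := by linarith
  refine ⟨κ⁻¹, inv_pos.2 hκ0, inv_lt_one_of_one_lt₀ hκ, fun x => x + κ • (T x - x),
    fun x y => ?_, fun x => ?_⟩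
  · have hdiff : (x + κ • (T x - x)) - (y + κ • (T y - y))
        = (x - y) + κ • ((T x - x) - (T y - y)) := by module
    rw [hdiff, ← pow_le_pow_iff_left₀ (norm_nonneg _) (norm_nonneg _) two_ne_zero,
      norm_add_sq_real, real_inner_smul_right, norm_smul, Real.norm_of_nonneg hκ0.le]
    nlinarith [mul_nonpos_of_nonneg_of_nonpos hκ0.le (hT x y)]
  · rw [smul_add, smul_smul, inv_mul_cancel₀ hκ0.ne', one_smul, sub_smul, one_smul]
    abel

theorem davisYin_two_inner_add_mul_norm_sq_nonpos {a P Q U : E} {t L : ℝ} (hL : 0 < L)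
    (ht : 0 ≤ t) (hP : ‖P‖ ^ 2 ≤ ⟪a, P⟫) (hQ : ‖Q‖ ^ 2 ≤ ⟪(2 : ℝ) • P - a - t • U, Q⟫)
    (hU : ‖U‖ ^ 2 ≤ L * ⟪U, P⟫) :
    2 * ⟪a, Q - P⟫ + (2 - t * L / 2) * ‖Q - P‖ ^ 2 ≤ 0 := by
  have hfirm : 2 * ⟪a, Q - P⟫ + 2 * ‖Q - P‖ ^ 2 ≤ t * (2 * ⟪U, P - Q⟫ - 2 * ⟪U, P⟫) := by
    rw [inner_sub_left, inner_sub_left, real_inner_smul_left, real_inner_smul_left] at hQ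
    rw [inner_sub_right, inner_sub_right, norm_sub_sq_real, real_inner_comm P Q]
    linarith
  have hyoung : L * (2 * ⟪U, P - Q⟫) ≤ 2 * ‖U‖ ^ 2 + L ^ 2 / 2 * ‖Q - P‖ ^ 2 := by
    have hcs := real_inner_le_norm U (P - Q)
    rw [norm_sub_rev] at hcs
    nlinarith [sq_nonneg (2 * ‖U‖ - L * ‖Q - P‖)]
  have hcross : 2 * ⟪U, P - Q⟫ - 2 * ⟪U, P⟫ ≤ L / 2 * ‖Q - P‖ ^ 2 := by
    refine le_of_mul_le_mul_left ?_ hL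
    linarith
  linarith [mul_le_mul_of_nonneg_left hcross ht]

section Gradient

variable [CompleteSpace E] {h : E → ℝ}

theorem hasDerivAt_comp_add_smul {x d : E} {s : ℝ} (hh : DifferentiableAt ℝ h (x + s • d)) :
    HasDerivAt (fun r : ℝ => h (x + r • d)) ⟪gradient h (x + s • d), d⟫ s := by
  rw [inner_gradient_left]
  have hline : HasDerivAt (fun r : ℝ => x + r • d) d s := by
    simpa using ((hasDerivAt_id s).smul_const d).const_add x
  exact hh.hasFDerivAt.comp_hasDerivAt s hline

theorem ConvexOn.add_inner_gradient_le (hh : ConvexOn ℝ univ h) {x : E}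
    (hx : DifferentiableAt ℝ h x) (y : E) : h x + ⟪gradient h x, y - x⟫ ≤ h y := by
  have hline : ConvexOn ℝ univ fun r : ℝ => h (x + r • (y - x)) := by
    have := hh.comp_affineMap (AffineMap.lineMap x y)
    simpa [Function.comp_def, AffineMap.lineMap_apply_module', add_comm] using this
  have hderiv := hasDerivAt_comp_add_smul (s := 0) (d := y - x) (by simpa using hx)
  have := hline.le_slope_of_hasDerivAt (mem_univ 0) (mem_univ 1) one_pos hderiv
  simp only [slope_def_field, zero_smul, one_smul, add_zero, add_sub_cancel, sub_zero,
    div_one] at this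
  linarith

theorem le_add_inner_gradient_add_mul_norm_sq {L : ℝ} (hh : Differentiable ℝ h)
    (hsmooth : ∀ x y, ‖gradient h x - gradient h y‖ ≤ L * ‖x - y‖) (x y : E) :
    h y ≤ h x + ⟪gradient h x, y - x⟫ + L / 2 * ‖y - x‖ ^ 2 := by
  set d := y - x
  set ψ : ℝ → ℝ := fun s => h (x + s • d) - s * ⟪gradient h x, d⟫ - L / 2 * s ^ 2 * ‖d‖ ^ 2
  have hψ : ∀ s, HasDerivAt ψ
      (⟪gradient h (x + s • d), d⟫ - ⟪gradient h x, d⟫ - L * s * ‖d‖ ^ 2) s := by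
    intro s
    refine (((hasDerivAt_comp_add_smul (x := x) (d := d) (hh _)).sub
      ((hasDerivAt_id s).mul_const ⟪gradient h x, d⟫)).sub
      (((hasDerivAt_pow 2 s).const_mul (L / 2)).mul_const (‖d‖ ^ 2))).congr_deriv ?_
    push_cast
    ring
  have hψ' : ∀ s ∈ interior (Icc (0 : ℝ) 1),
      ⟪gradient h (x + s • d), d⟫ - ⟪gradient h x, d⟫ - L * s * ‖d‖ ^ 2 ≤ 0 := by
    intro s hs
    rw [interior_Icc] at hs
    rw [sub_nonpos]
    calc ⟪gradient h (x + s • d), d⟫ - ⟪gradient h x, d⟫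
        = ⟪gradient h (x + s • d) - gradient h x, d⟫ := (inner_sub_left _ _ _).symm
      _ ≤ ‖gradient h (x + s • d) - gradient h x‖ * ‖d‖ := real_inner_le_norm _ _
      _ ≤ L * ‖(x + s • d) - x‖ * ‖d‖ := by gcongr; exact hsmooth _ _
      _ = L * s * ‖d‖ ^ 2 := by
        rw [add_sub_cancel_left, norm_smul, Real.norm_of_nonneg hs.1.le]; ring
  have hanti := antitoneOn_of_hasDerivWithinAt_nonpos (convex_Icc 0 1)
    (fun s _ => (hψ s).continuousAt.continuousWithinAt) (fun s _ => (hψ s).hasDerivWithinAt) hψ'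
  have := hanti (left_mem_Icc.2 zero_le_one) (right_mem_Icc.2 zero_le_one) zero_le_one
  simp only [ψ, zero_smul, one_smul, add_zero, add_sub_cancel, zero_mul, sub_zero, one_mul,
    one_pow, mul_one, d] at this
  linarith

theorem ConvexOn.add_inner_gradient_add_norm_sq_le {L : ℝ} (hh : ConvexOn ℝ univ h)
    (hdiff : Differentiable ℝ h) (hL : 0 < L)
    (hsmooth : ∀ x y, ‖gradient h x - gradient h y‖ ≤ L * ‖x - y‖) (a b : E) :
    h a + ⟪gradient h a, b - a⟫ + 1 / (2 * L) * ‖gradient h b - gradient h a‖ ^ 2 ≤ h b := by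
  set v := gradient h b - gradient h a
  set z := b - L⁻¹ • v
  have hlow := hh.add_inner_gradient_le (hdiff a) z
  have hup := le_add_inner_gradient_add_mul_norm_sq hdiff hsmooth b z
  have hzb : z - b = -(L⁻¹ • v) := by simp [z]
  have hza : z - a = (b - a) - L⁻¹ • v := by simp [z]; abel
  rw [hzb, norm_neg, norm_smul, inner_neg_right, real_inner_smul_right] at hup
  rw [hza, inner_sub_right, real_inner_smul_right] at hlow
  have hv : ⟪gradient h b, v⟫ - ⟪gradient h a, v⟫ = ‖v‖ ^ 2 := by
    rw [← inner_sub_left, real_inner_self_eq_norm_sq]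
  rw [Real.norm_of_nonneg (inv_nonneg.2 hL.le)] at hup
  field_simp at hup hlow ⊢
  nlinarith

theorem ConvexOn.norm_sq_gradient_sub_le_mul_inner {L : ℝ} (hh : ConvexOn ℝ univ h)
    (hdiff : Differentiable ℝ h) (hL : 0 < L)
    (hsmooth : ∀ x y, ‖gradient h x - gradient h y‖ ≤ L * ‖x - y‖) (x y : E) :
    ‖gradient h x - gradient h y‖ ^ 2 ≤ L * ⟪gradient h x - gradient h y, x - y⟫ := by
  have hxy := hh.add_inner_gradient_add_norm_sq_le hdiff hL hsmooth x y
  have hyx := hh.add_inner_gradient_add_norm_sq_le hdiff hL hsmooth y x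
  rw [norm_sub_rev] at hxy
  have e : ⟪gradient h x - gradient h y, x - y⟫
      = -⟪gradient h x, y - x⟫ - ⟪gradient h y, x - y⟫ := by
    rw [inner_sub_left, ← neg_sub x y, inner_neg_right]; ring
  rw [e]
  field_simp at hxy hyx
  nlinarith

theorem isMinOn_add_add_of_isProx {f g : E → ℝ} {t : ℝ} {z p : E} (hf : ConvexOn ℝ univ f)
    (hg : ConvexOn ℝ univ g) (hh : ConvexOn ℝ univ h) (hp : DifferentiableAt ℝ h p) (ht : 0 < t)
    (hpf : IsProx f t z p) (hpg : IsProx g t ((2 : ℝ) • p - z - t • gradient h p) p) :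
    IsMinOn (fun x => f x + g x + h x) univ p := by
  refine isMinOn_univ_iff.2 fun x => ?_
  have hfx := hpf.inner_sub_le hf ht x
  have hgx := hpg.inner_sub_le hg ht x
  have hhx := hh.add_inner_gradient_le hp x
  rw [show (2 : ℝ) • p - z - t • gradient h p - p = -(z - p) - t • gradient h p by module,
    inner_sub_left, inner_neg_left, real_inner_smul_left] at hgx
  refine le_of_mul_le_mul_left ?_ ht
  nlinarith

end Gradient

theorem dys_operator_averaged_and_fixed_points_general
    (n : ℕ) (L t : ℝ) (hL : 0 < L)
    (f g h : EuclideanSpace ℝ (Fin n) → ℝ)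
    (hf_conv : ConvexOn ℝ Set.univ f)
    (hg_conv : ConvexOn ℝ Set.univ g)
    (hh_conv : ConvexOn ℝ Set.univ h)
    (hh_diff : Differentiable ℝ h)
    (hh_smooth : ∀ x y, ‖gradient h x - gradient h y‖ ≤ L * ‖x - y‖)
    (ht : 0 < t) (ht2 : t < 2 / L)
    (proxf proxg : EuclideanSpace ℝ (Fin n) → EuclideanSpace ℝ (Fin n))
    (hproxf : ∀ y, IsMinOn (fun z => f z + (1 / (2 * t)) * ‖z - y‖ ^ 2) Set.univ (proxf y))
    (hproxg : ∀ y, IsMinOn (fun z => g z + (1 / (2 * t)) * ‖z - y‖ ^ 2) Set.univ (proxg y))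
    (T : EuclideanSpace ℝ (Fin n) → EuclideanSpace ℝ (Fin n))
    (hT : ∀ z, T z =
      z - proxf z + proxg ((2 : ℝ) • proxf z - z - t • gradient h (proxf z))) :
    (∃ α : ℝ, 0 < α ∧ α < 1 ∧
      ∃ S : EuclideanSpace ℝ (Fin n) → EuclideanSpace ℝ (Fin n),
        (∀ x y, ‖S x - S y‖ ≤ ‖x - y‖) ∧ ∀ x, T x = (1 - α) • x + α • S x) ∧
    ∀ zstar, T zstar = zstar →
      IsMinOn (fun x => f x + g x + h x) Set.univ (proxf zstar) := by
  have htL : t * L < 2 := by rwa [lt_div_iff₀ hL] at ht2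
  have hTsub : ∀ z, T z - z = proxg ((2 : ℝ) • proxf z - z - t • gradient h (proxf z)) - proxf z :=
    fun z => by rw [hT]; abel
  refine ⟨isAveraged_of_two_inner_add_mul_norm_sq_nonpos (κ := 2 - t * L / 2) (by linarith)
    fun x y => ?_, fun z hz => ?_⟩
  · rw [hTsub, hTsub, sub_sub_sub_comm]
    refine davisYin_two_inner_add_mul_norm_sq_nonpos hL ht.le
      (IsProx.norm_sub_sq_le_inner hf_conv ht (hproxf x) (hproxf y)) ?_
      (hh_conv.norm_sq_gradient_sub_le_mul_inner hh_diff hL hh_smooth _ _)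
    convert IsProx.norm_sub_sq_le_inner hg_conv ht (hproxg _) (hproxg _) using 2
    module
  · have hfix : proxg ((2 : ℝ) • proxf z - z - t • gradient h (proxf z)) = proxf z := by
      rw [← sub_eq_zero, ← hTsub, hz, sub_self]
    have hpg := hproxg ((2 : ℝ) • proxf z - z - t • gradient h (proxf z))
    rw [hfix] at hpg
    exact isMinOn_add_add_of_isProx hf_conv hg_conv hh_conv (hh_diff _) ht (hproxf z) hpg

/-- For `f, g, h` proper, LSC, convex with `h` `L`-smooth and
`0 < t < 2/L`, the Davis–Yin operator
`T(z) = z − prox_{tf}(z) + prox_{tg}(2 prox_{tf}(z) − z − t∇h(prox_{tf}(z)))`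
is averaged, and if `z*` is a fixed point of `T` then `prox_{tf}(z*)` minimizes
`f + g + h`. (Here `f, g` are real-valued, so constraint qualifications for the
subdifferential sum rule hold automatically.) -/
theorem dys_operator_averaged_and_fixed_points
    (n : ℕ) (L t : ℝ) (hL : 0 < L)
    (f g h : EuclideanSpace ℝ (Fin n) → ℝ)
    (hf_conv : ConvexOn ℝ Set.univ f) (hf_lsc : LowerSemicontinuous f)
    (hg_conv : ConvexOn ℝ Set.univ g) (hg_lsc : LowerSemicontinuous g)
    (hh_conv : ConvexOn ℝ Set.univ h)
    (hh_diff : Differentiable ℝ h)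
    (hh_smooth : ∀ x y, ‖gradient h x - gradient h y‖ ≤ L * ‖x - y‖)
    (ht : 0 < t) (ht2 : t < 2 / L)
    (proxf proxg : EuclideanSpace ℝ (Fin n) → EuclideanSpace ℝ (Fin n))
    (hproxf : ∀ y, IsMinOn (fun z => f z + (1 / (2 * t)) * ‖z - y‖ ^ 2) Set.univ (proxf y))
    (hproxg : ∀ y, IsMinOn (fun z => g z + (1 / (2 * t)) * ‖z - y‖ ^ 2) Set.univ (proxg y))
    (T : EuclideanSpace ℝ (Fin n) → EuclideanSpace ℝ (Fin n))
    (hT : ∀ z, T z =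
      z - proxf z + proxg ((2 : ℝ) • proxf z - z - t • gradient h (proxf z))) :
    (∃ α : ℝ, 0 < α ∧ α < 1 ∧
      ∃ S : EuclideanSpace ℝ (Fin n) → EuclideanSpace ℝ (Fin n),
        (∀ x y, ‖S x - S y‖ ≤ ‖x - y‖) ∧ ∀ x, T x = (1 - α) • x + α • S x) ∧
    ∀ zstar, T zstar = zstar →
      IsMinOn (fun x => f x + g x + h x) Set.univ (proxf zstar) :=
  dys_operator_averaged_and_fixed_points_general n L t hL f g h hf_conv hg_conv hh_conv hh_diff
    hh_smooth ht ht2 proxf proxg hproxf hproxg T hT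
end
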